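/- arXiv:1609.04512 — 2 statements merged into one kernel-verified Lean document; each statement's English description precedes it below -/
import Mathlib

section
/- Left-justification is safe for a k-way merge: let σ be a total order of the platoons of a k-way merge instance extending each lane's release order, and suppose S is a valid schedule whose platoons cross in the order σ (crossing times are increasing along σ). Then the left-justified schedule for σ is valid, every platoon's crossing time in the left-justified schedule is at most its crossing time in S, and hence the delay of the left-justified schedule is at most the delay of S. -/
/-- Left-justified scheduling of a crossing order of (lane, release, length)
triples, where the previous platoon finished at time `t`: each platoon crosses at
the maximum of its release time and the previous platoon's crossing time plus
length. -/
noncomputable def leftJust {α : Type} : ℝ → List (α × ℝ × ℝ) → List (α × (ℝ × ℝ) × ℝ)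
  | _, [] => []
  | t, (b, p) :: L => (b, p, max t p.1) :: leftJust (max t p.1 + p.2) L

/-- The left-justified schedule for a crossing order: the first platoon crosses at
its release time, and each subsequent platoon crosses at the maximum of its
release time and the previous platoon's crossing time plus length. -/
noncomputable def leftJustStart {α : Type} : List (α × ℝ × ℝ) → List (α × (ℝ × ℝ) × ℝ)
  | [] => []
  | (b, p) :: L => (b, p, p.1) :: leftJust (p.1 + p.2) L

/-!
In the left-justified schedule a platoon crosses at the later of its release time and the moment
the previous platoon has finished. In `S` it crosses no earlier than either of these, and by
induction along the crossing order the previous platoon finishes no later in the left-justified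
schedule than in `S`. Validity holds by construction, and the delay bound follows because the two
schedules are compared platoon by platoon.
-/

namespace List

theorem Forall₂.rel_of_getElem?_eq_some {α β : Type*} {R : α → β → Prop} {l₁ : List α}
    {l₂ : List β} (h : Forall₂ R l₁ l₂) {k : ℕ} {a : α} {b : β} (ha : l₁[k]? = some a)
    (hb : l₂[k]? = some b) : R a b := by
  induction h generalizing k with
  | nil => simp at ha
  | cons hab _ ih =>
    cases k with
    | zero => simp only [getElem?_cons_zero, Option.some.injEq] at ha hb; exact ha ▸ hb ▸ hab
    | succ k => exact ih ha hb

theorem Forall₂.exists_mem_right_of_mem_left {α β : Type*} {R : α → β → Prop} {l₁ : List α}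
    {l₂ : List β} (h : Forall₂ R l₁ l₂) {a : α} (ha : a ∈ l₁) : ∃ b ∈ l₂, R a b := by
  induction h with
  | nil => simp at ha
  | @cons a' b' _ _ hab _ ih =>
    rcases mem_cons.mp ha with rfl | ha
    · exact ⟨b', mem_cons_self, hab⟩
    · obtain ⟨b, hb, hab⟩ := ih ha
      exact ⟨b, mem_cons_of_mem _ hb, hab⟩

end List

section LeftJustified

variable {α : Type}

theorem leftJust_eq_leftJustStart {t : ℝ} {L : List (α × ℝ × ℝ)}
    (ht : ∀ p ∈ L.head?, t ≤ p.2.1) : leftJust t L = leftJustStart L := by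
  match L, ht with
  | [], _ => rfl
  | (b, p) :: L, ht =>
    simp only [leftJust, leftJustStart, max_eq_right (ht (b, p) rfl)]

theorem exists_leftJust_eq_leftJustStart (L : List (α × ℝ × ℝ)) :
    ∃ t, leftJust t L = leftJustStart L := by
  match L with
  | [] => exact ⟨0, rfl⟩
  | (b, p) :: L => exact ⟨p.1, leftJust_eq_leftJustStart (by simp)⟩

theorem release_le_of_mem_leftJust :
    ∀ {t : ℝ} {L : List (α × ℝ × ℝ)}, ∀ e ∈ leftJust t L, e.2.1.1 ≤ e.2.2
  | _, [] => by simp [leftJust]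
  | _, (_, _) :: _ => by
    simp only [leftJust, List.mem_cons]
    rintro e (rfl | he)
    · exact le_max_right _ _
    · exact release_le_of_mem_leftJust e he

theorem isChain_leftJust :
    ∀ (t : ℝ) (L : List (α × ℝ × ℝ)), (leftJust t L).IsChain (fun e f => e.2.2 + e.2.1.2 ≤ f.2.2)
  | _, [] => List.isChain_nil
  | _, (_, _) :: L => by
    rw [leftJust, List.isChain_cons]
    refine ⟨?_, isChain_leftJust _ L⟩
    match L with
    | [] => simp [leftJust]
    | (_, _) :: _ => simp [leftJust]

theorem forall₂_leftJust_le :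
    ∀ {t : ℝ} {S : List (α × (ℝ × ℝ) × ℝ)}, (∀ e ∈ S, e.2.1.1 ≤ e.2.2) →
      S.IsChain (fun e f => e.2.2 + e.2.1.2 ≤ f.2.2) → (∀ e ∈ S.head?, t ≤ e.2.2) →
      List.Forall₂ (fun e e' => e.2.1 = e'.2.1 ∧ e.2.2 ≤ e'.2.2)
        (leftJust t (S.map fun e => (e.1, e.2.1))) S
  | _, [], _, _, _ => List.Forall₂.nil
  | t, s :: S, hrel, hchain, hstart => by
    have hs : max t s.2.1.1 ≤ s.2.2 := max_le (hstart s rfl) (hrel s List.mem_cons_self)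
    refine List.Forall₂.cons ⟨rfl, hs⟩ (forall₂_leftJust_le
      (fun f hf => hrel f (List.mem_cons_of_mem _ hf)) (List.isChain_cons.mp hchain).2 ?_)
    intro f hf
    linarith [(List.isChain_cons.mp hchain).1 f hf]

theorem forall₂_leftJustStart_le {S : List (α × (ℝ × ℝ) × ℝ)} (hrel : ∀ e ∈ S, e.2.1.1 ≤ e.2.2)
    (hchain : S.IsChain (fun e f => e.2.2 + e.2.1.2 ≤ f.2.2)) :
    List.Forall₂ (fun e e' => e.2.1 = e'.2.1 ∧ e.2.2 ≤ e'.2.2)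
      (leftJustStart (S.map fun e => (e.1, e.2.1))) S := by
  match S with
  | [] => exact List.Forall₂.nil
  | s :: S =>
    rw [← leftJust_eq_leftJustStart (t := s.2.1.1) (by simp)]
    exact forall₂_leftJust_le hrel hchain (by simpa using hrel s List.mem_cons_self)

end LeftJustified

theorem stmt6_general {α : Type} (σ : List (α × ℝ × ℝ))
    (S : List (α × (ℝ × ℝ) × ℝ))
    (hSσ : S.map (fun e => (e.1, e.2.1)) = σ)
    (hSrel : ∀ e ∈ S, e.2.1.1 ≤ e.2.2)
    (hSchain : S.Chain' (fun e f => e.2.2 + e.2.1.2 ≤ f.2.2)) :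
    (∀ e ∈ leftJustStart σ, e.2.1.1 ≤ e.2.2) ∧
    (leftJustStart σ).Chain' (fun e f => e.2.2 + e.2.1.2 ≤ f.2.2) ∧
    (∀ (k : ℕ) (e e' : α × (ℝ × ℝ) × ℝ),
      (leftJustStart σ)[k]? = some e → S[k]? = some e' → e.2.2 ≤ e'.2.2) ∧
    (∀ d : ℝ, (∀ e ∈ S, e.2.2 - e.2.1.1 ≤ d) →
      ∀ e ∈ leftJustStart σ, e.2.2 - e.2.1.1 ≤ d) := by
  subst hSσ
  obtain ⟨t, ht⟩ := exists_leftJust_eq_leftJustStart (S.map fun e => (e.1, e.2.1))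
  have hle := forall₂_leftJustStart_le hSrel hSchain
  refine ⟨ht ▸ release_le_of_mem_leftJust, ht ▸ isChain_leftJust _ _,
    fun k e e' he he' => (hle.rel_of_getElem?_eq_some he he').2, ?_⟩
  intro d hd e he
  obtain ⟨e', he'S, hsame, hcross⟩ := hle.exists_mem_right_of_mem_left he
  linarith [hd e' he'S, congrArg (·.1) hsame]

/-- Left-justification is safe for a k-way merge (lanes indexed by `α`; any two
platoons on different lanes are incompatible, so that a schedule whose crossing
times increase along the crossing order `σ` is valid exactly when every platoon
crosses no earlier than its release time and each platoon finishes crossing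
before the next one starts).  Let `σ` be a crossing order extending each lane's
release order, and let `S` be a valid schedule crossing in the order `σ`.  Then
the left-justified schedule for `σ` is valid, each of its crossing times is at
most the corresponding crossing time of `S`, and hence its delay is at most the
delay of `S`. -/
theorem stmt6 {α : Type} (σ : List (α × ℝ × ℝ))
    (hpos : ∀ e ∈ σ, 0 < e.2.2)
    (horder : ∀ i j : ℕ, i < j → ∀ ei ej, σ[i]? = some ei → σ[j]? = some ej →
      ei.1 = ej.1 → ei.2.1 + ei.2.2 ≤ ej.2.1)
    (S : List (α × (ℝ × ℝ) × ℝ))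
    (hSσ : S.map (fun e => (e.1, e.2.1)) = σ)
    (hSrel : ∀ e ∈ S, e.2.1.1 ≤ e.2.2)
    (hSchain : S.Chain' (fun e f => e.2.2 + e.2.1.2 ≤ f.2.2)) :
    (∀ e ∈ leftJustStart σ, e.2.1.1 ≤ e.2.2) ∧
    (leftJustStart σ).Chain' (fun e f => e.2.2 + e.2.1.2 ≤ f.2.2) ∧
    (∀ (k : ℕ) (e e' : α × (ℝ × ℝ) × ℝ),
      (leftJustStart σ)[k]? = some e → S[k]? = some e' → e.2.2 ≤ e'.2.2) ∧
    (∀ d : ℝ, (∀ e ∈ S, e.2.2 - e.2.1.1 ≤ d) →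
      ∀ e ∈ leftJustStart σ, e.2.2 - e.2.1.1 ≤ d) :=
  stmt6_general σ S hSσ hSrel hSchain
end

section
/- Dynamic programming recurrence for the k-way merge: fix a k-way merge instance, a real delay bound d, and for each state s define t_d(s) as the infimum of completion times of valid partial schedules for s in which every scheduled platoon has delay at most d (t_d(s) = +∞ if no such partial schedule exists), where the completion time of the empty state is the minimum release time of any platoon of the instance. Then for every nonempty state s, t_d(s) equals the minimum, over all lanes j with s_j ≥ 1 such that max(t_d(s − e_j), r) ≤ r + d, of max(t_d(s − e_j), r) + ℓ, where s − e_j is s with its j-th coordinate decreased by one and r and ℓ are the release time and length of the s_j-th platoon (in release order) on lane j; the minimum over an empty set is +∞. -/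
/-- A platoon is a pair (release time, length). -/
abbrev Platoon := ℝ × ℝ

/-- A lane: a list of platoons in release order, with positive lengths and
disjoint release ranges. -/
def LaneOK (P : List Platoon) : Prop :=
  (∀ p ∈ P, 0 < p.2) ∧ P.Chain' (fun p q => p.1 + p.2 ≤ q.1)

/-- Release time of the `i`-th platoon (0-indexed, in release order) on lane `j`. -/
def rel {k : ℕ} (Lanes : Fin k → List Platoon) (j : Fin k) (i : ℕ) : ℝ :=
  ((Lanes j).getD i (0, 0)).1

/-- Length of the `i`-th platoon (0-indexed, in release order) on lane `j`. -/
def plen {k : ℕ} (Lanes : Fin k → List Platoon) (j : Fin k) (i : ℕ) : ℝ :=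
  ((Lanes j).getD i (0, 0)).2

/-- A valid partial schedule for the state `s` of a `k`-way merge (any two
platoons on different lanes are incompatible): crossing times `c j i` for the
first `s j` platoons of each lane `j` satisfying the three validity conditions. -/
def PartialValid {k : ℕ} (Lanes : Fin k → List Platoon) (s : Fin k → ℕ)
    (c : Fin k → ℕ → ℝ) : Prop :=
  (∀ j, ∀ i < s j, rel Lanes j i ≤ c j i) ∧
  (∀ j, ∀ i₁ i₂, i₁ < i₂ → i₂ < s j → c j i₁ + plen Lanes j i₁ ≤ c j i₂) ∧
  (∀ j₁ j₂, j₁ ≠ j₂ → ∀ i₁ < s j₁, ∀ i₂ < s j₂,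
    Disjoint (Set.Ioo (c j₁ i₁) (c j₁ i₁ + plen Lanes j₁ i₁))
             (Set.Ioo (c j₂ i₂) (c j₂ i₂ + plen Lanes j₂ i₂)))

/-- Every platoon scheduled in the partial schedule has delay at most `d`. -/
def DelayLE {k : ℕ} (Lanes : Fin k → List Platoon) (s : Fin k → ℕ)
    (c : Fin k → ℕ → ℝ) (d : ℝ) : Prop :=
  ∀ j, ∀ i < s j, c j i - rel Lanes j i ≤ d

/-- The minimum release time of any platoon of the instance. -/
noncomputable def minRelease {k : ℕ} (Lanes : Fin k → List Platoon) : ℝ :=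
  sInf {x : ℝ | ∃ j, ∃ i < (Lanes j).length, x = rel Lanes j i}

/-- The completion time of a partial schedule: the maximum, over the scheduled
platoons, of crossing time plus length; the completion time of the empty state is
the minimum release time of any platoon of the instance. -/
noncomputable def completion {k : ℕ} (Lanes : Fin k → List Platoon)
    (s : Fin k → ℕ) (c : Fin k → ℕ → ℝ) : ℝ :=
  sSup ({minRelease Lanes} ∪ {x : ℝ | ∃ j, ∃ i < s j, x = c j i + plen Lanes j i})

/-- `td Lanes d s` is the infimum of the completion times of valid partial
schedules for state `s` in which every scheduled platoon has delay at most `d`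
(`+∞` if no such partial schedule exists). -/
noncomputable def td {k : ℕ} (Lanes : Fin k → List Platoon) (d : ℝ)
    (s : Fin k → ℕ) : EReal :=
  sInf {x : EReal | ∃ c, PartialValid Lanes s c ∧ DelayLE Lanes s c d ∧
    x = ((completion Lanes s c : ℝ) : EReal)}

/-!
Cut a valid schedule of `s` at the platoon that finishes last. It is the last platoon of some
lane `J`, and since platoons on different lanes do not overlap and have positive length, every
other platoon finishes before it starts; so the rest is a schedule of `s - e_J` completing by that
crossing time, which lies in `[r, r + d]`. Conversely, a schedule of `s - e_j` with completion `C`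
extends by letting the new platoon cross at `max C r`. The extension needs `t_d (s - e_j)` to be
attained; since the recurrence is a minimum over finitely many lanes, attainment of every finite
`t_d` follows by well-founded induction on `s`.
-/

open Function

section KWayMerge

variable {k : ℕ} {Lanes : Fin k → List Platoon} {d : ℝ}

theorem le_or_le_of_disjoint_Ioo {α : Type*} [LinearOrder α] [DenselyOrdered α]
    {a₁ b₁ a₂ b₂ : α} (h : Disjoint (Set.Ioo a₁ b₁) (Set.Ioo a₂ b₂)) (h₁ : a₁ < b₁)
    (h₂ : a₂ < b₂) : b₁ ≤ a₂ ∨ b₂ ≤ a₁ := by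
  rw [Set.Ioo_disjoint_Ioo, min_le_iff, le_max_iff, le_max_iff] at h
  by_contra! hc
  rcases h with (h | h) | (h | h) <;> order

theorem disjoint_Ioo_of_le {α : Type*} [LinearOrder α] [DenselyOrdered α] {a₁ b₁ a₂ b₂ : α}
    (h : b₁ ≤ a₂) : Disjoint (Set.Ioo a₁ b₁) (Set.Ioo a₂ b₂) :=
  Set.Ioo_disjoint_Ioo.2 ((min_le_left _ _).trans (h.trans (le_max_right _ _)))

theorem lt_update_sub_one_iff {s : Fin k → ℕ} {j j' : Fin k} {i : ℕ} :
    i < update s j (s j - 1) j' ↔ i < s j' ∧ ¬(j' = j ∧ i = s j - 1) := by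
  rcases eq_or_ne j' j with rfl | hj
  · simp only [update_self, true_and]
    omega
  · simp [hj]

theorem Set.finite_setOf_exists_lt {ι α : Type*} [Finite ι] (n : ι → ℕ) (f : ι → ℕ → α) :
    {x | ∃ j, ∃ i < n j, x = f j i}.Finite :=
  (Set.finite_iUnion fun j => (Set.finite_lt_nat (n j)).image (f j)).subset <| by
    rintro _ ⟨j, i, hi, rfl⟩
    exact Set.mem_iUnion.2 ⟨j, i, hi, rfl⟩

theorem plen_pos (hL : ∀ j, LaneOK (Lanes j)) {j : Fin k} {i : ℕ}
    (h : i < (Lanes j).length) : 0 < plen Lanes j i := by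
  rw [plen, List.getD_eq_getElem _ _ h]
  exact (hL j).1 _ (List.getElem_mem h)

theorem minRelease_le_rel {j : Fin k} {i : ℕ} (h : i < (Lanes j).length) :
    minRelease Lanes ≤ rel Lanes j i :=
  csInf_le (Set.finite_setOf_exists_lt _ _).bddBelow ⟨j, i, h, rfl⟩

theorem le_completion (s : Fin k → ℕ) (c : Fin k → ℕ → ℝ) {j : Fin k} {i : ℕ} (h : i < s j) :
    c j i + plen Lanes j i ≤ completion Lanes s c :=
  le_csSup ((Set.finite_singleton _).union (Set.finite_setOf_exists_lt _ _)).bddAbove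
    (Or.inr ⟨j, i, h, rfl⟩)

theorem minRelease_le_completion (s : Fin k → ℕ) (c : Fin k → ℕ → ℝ) :
    minRelease Lanes ≤ completion Lanes s c :=
  le_csSup ((Set.finite_singleton _).union (Set.finite_setOf_exists_lt _ _)).bddAbove
    (Or.inl rfl)

theorem completion_le {s : Fin k → ℕ} {c : Fin k → ℕ → ℝ} {B : ℝ} (hB : minRelease Lanes ≤ B)
    (h : ∀ j, ∀ i < s j, c j i + plen Lanes j i ≤ B) : completion Lanes s c ≤ B :=
  csSup_le ⟨_, Or.inl rfl⟩ <| by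
    rintro x (rfl | ⟨j, i, hi, rfl⟩)
    exacts [hB, h j i hi]

theorem completion_zero (c : Fin k → ℕ → ℝ) : completion Lanes 0 c = minRelease Lanes := by
  simp [completion]

theorem PartialValid.mono {s s' : Fin k → ℕ} {c : Fin k → ℕ → ℝ} (hv : PartialValid Lanes s c)
    (h : s' ≤ s) : PartialValid Lanes s' c :=
  ⟨fun j i hi => hv.1 j i (hi.trans_le (h j)),
   fun j i₁ i₂ h₁₂ h₂ => hv.2.1 j i₁ i₂ h₁₂ (h₂.trans_le (h j)),
   fun j₁ j₂ hne i₁ h₁ i₂ h₂ => hv.2.2 j₁ j₂ hne i₁ (h₁.trans_le (h j₁)) i₂ (h₂.trans_le (h j₂))⟩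

theorem DelayLE.mono {s s' : Fin k → ℕ} {c : Fin k → ℕ → ℝ} (hd : DelayLE Lanes s c d)
    (h : s' ≤ s) : DelayLE Lanes s' c d :=
  fun j i hi => hd j i (hi.trans_le (h j))

theorem partialValid_zero (c : Fin k → ℕ → ℝ) : PartialValid Lanes 0 c := by
  simp [PartialValid]

theorem delayLE_zero (c : Fin k → ℕ → ℝ) : DelayLE Lanes 0 c d := by
  simp [DelayLE]

theorem td_le_completion {s : Fin k → ℕ} {c : Fin k → ℕ → ℝ} (hv : PartialValid Lanes s c)
    (hd : DelayLE Lanes s c d) : td Lanes d s ≤ completion Lanes s c :=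
  sInf_le ⟨c, hv, hd, rfl⟩

theorem td_zero : td Lanes d 0 = minRelease Lanes := by
  refine le_antisymm ?_ (le_sInf ?_)
  · simpa [completion_zero] using td_le_completion (partialValid_zero 0) (delayLE_zero (d := d) 0)
  · rintro _ ⟨c, -, -, rfl⟩
    rw [completion_zero]

theorem exists_extend_schedule {s : Fin k → ℕ} {j : Fin k} (hj : 1 ≤ s j)
    (hℓ : 0 ≤ plen Lanes j (s j - 1)) {c' : Fin k → ℕ → ℝ}
    (hv : PartialValid Lanes (update s j (s j - 1)) c')
    (hd : DelayLE Lanes (update s j (s j - 1)) c' d) {M : ℝ}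
    (hM : completion Lanes (update s j (s j - 1)) c' ≤ M)
    (hrM : rel Lanes j (s j - 1) ≤ M) (hMd : M ≤ rel Lanes j (s j - 1) + d) :
    ∃ c, PartialValid Lanes s c ∧ DelayLE Lanes s c d ∧
      completion Lanes s c = M + plen Lanes j (s j - 1) := by
  set s' := update s j (s j - 1)
  have hend : ∀ j', ∀ i < s' j', c' j' i + plen Lanes j' i ≤ M :=
    fun j' i hi => (le_completion s' c' hi).trans hM
  have hcases : ∀ j', ∀ i < s j', (j' = j ∧ i = s j - 1) ∨ i < s' j' := fun j' i hi =>
    or_iff_not_imp_left.2 fun hn => lt_update_sub_one_iff.2 ⟨hi, hn⟩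
  let c : Fin k → ℕ → ℝ := fun j' i => if j' = j ∧ i = s j - 1 then M else c' j' i
  have hc_new : c j (s j - 1) = M := if_pos ⟨rfl, rfl⟩
  have hc_old : ∀ j', ∀ i < s' j', c j' i = c' j' i :=
    fun j' i hi => if_neg (lt_update_sub_one_iff.1 hi).2
  refine ⟨c, ⟨fun j' i hi => ?_, fun j' i₁ i₂ h₁₂ h₂ => ?_, fun j₁ j₂ hne i₁ h₁ i₂ h₂ => ?_⟩,
    fun j' i hi => ?_, le_antisymm ?_ ?_⟩
  · rcases hcases j' i hi with ⟨rfl, rfl⟩ | hi'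
    · rwa [hc_new]
    · rw [hc_old j' i hi']
      exact hv.1 j' i hi'
  · have hi₁ : i₁ < s' j' := lt_update_sub_one_iff.2 ⟨h₁₂.trans h₂, by rintro ⟨rfl, rfl⟩; omega⟩
    rw [hc_old j' i₁ hi₁]
    rcases hcases j' i₂ h₂ with ⟨rfl, rfl⟩ | hi₂
    · rw [hc_new]
      exact hend _ _ hi₁
    · rw [hc_old j' i₂ hi₂]
      exact hv.2.1 j' i₁ i₂ h₁₂ hi₂
  · rcases hcases j₁ i₁ h₁ with ⟨rfl, rfl⟩ | h₁'
    · have h₂' : i₂ < s' j₂ := lt_update_sub_one_iff.2 ⟨h₂, fun h => hne h.1.symm⟩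
      rw [hc_new, hc_old j₂ i₂ h₂']
      exact (disjoint_Ioo_of_le (hend j₂ i₂ h₂')).symm
    rcases hcases j₂ i₂ h₂ with ⟨rfl, rfl⟩ | h₂'
    · rw [hc_new, hc_old j₁ i₁ h₁']
      exact disjoint_Ioo_of_le (hend j₁ i₁ h₁')
    · rw [hc_old j₁ i₁ h₁', hc_old j₂ i₂ h₂']
      exact hv.2.2 j₁ j₂ hne i₁ h₁' i₂ h₂'
  · rcases hcases j' i hi with ⟨rfl, rfl⟩ | hi'
    · rw [hc_new]
      linarith
    · rw [hc_old j' i hi']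
      exact hd j' i hi'
  · refine completion_le ((minRelease_le_completion s' c').trans (by linarith)) fun j' i hi => ?_
    rcases hcases j' i hi with ⟨rfl, rfl⟩ | hi'
    · rw [hc_new]
    · rw [hc_old j' i hi']
      linarith [hend j' i hi']
  · simpa only [hc_new] using le_completion s c (show s j - 1 < s j by omega)

theorem exists_last_platoon (hL : ∀ j, LaneOK (Lanes j)) {s : Fin k → ℕ}
    (hs : ∀ j, s j ≤ (Lanes j).length) {c : Fin k → ℕ → ℝ} (hv : PartialValid Lanes s c)
    (hne : ∃ j, 0 < s j) :
    ∃ J, 0 < s J ∧ ∀ j, ∀ i < s j,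
      c j i + plen Lanes j i ≤ c J (s J - 1) + plen Lanes J (s J - 1) := by
  classical
  obtain ⟨J, hJ, hmax⟩ := Finset.exists_max_image {j | 0 < s j}
    (fun j => c j (s j - 1) + plen Lanes j (s j - 1)) (hne.imp fun j hj => by simpa using hj)
  refine ⟨J, by simpa using hJ, fun j i hi => le_trans ?_ (hmax j (by simp; omega))⟩
  rcases (show i < s j - 1 ∨ i = s j - 1 by omega) with h | rfl
  · linarith [hv.2.1 j i (s j - 1) h (by omega),
      plen_pos hL ((show s j - 1 < s j by omega).trans_le (hs j))]
  · exact le_rfl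

theorem completion_update_le_of_last (hL : ∀ j, LaneOK (Lanes j)) {s : Fin k → ℕ}
    (hs : ∀ j, s j ≤ (Lanes j).length) {c : Fin k → ℕ → ℝ} (hv : PartialValid Lanes s c)
    {J : Fin k} (hJ : 0 < s J)
    (hlast : ∀ j, ∀ i < s j, c j i + plen Lanes j i ≤ c J (s J - 1) + plen Lanes J (s J - 1)) :
    completion Lanes (update s J (s J - 1)) c ≤ c J (s J - 1) := by
  have hJlt : s J - 1 < s J := by omega
  refine completion_le ((minRelease_le_rel (hJlt.trans_le (hs J))).trans (hv.1 J _ hJlt))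
    fun j i hi => ?_
  obtain ⟨hi, hne⟩ := lt_update_sub_one_iff.1 hi
  rcases eq_or_ne j J with rfl | hjJ
  · exact hv.2.1 j i (s j - 1) (by omega) hJlt
  · have hℓ := plen_pos hL (hi.trans_le (hs j))
    have hℓJ := plen_pos hL (hJlt.trans_le (hs J))
    refine (le_or_le_of_disjoint_Ioo (hv.2.2 j J hjJ i hi _ hJlt) (by linarith)
      (by linarith)).resolve_right fun h => ?_
    linarith [hlast j i hi]

variable (Lanes d) in
/-- The earliest crossing time of the `s j`-th platoon of lane `j` after an optimal schedule of
the other platoons of `s`. -/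
noncomputable def lastCrossing (s : Fin k → ℕ) (j : Fin k) : EReal :=
  max (td Lanes d (update s j (s j - 1))) (rel Lanes j (s j - 1))

variable (Lanes d) in
noncomputable def dpCandidates (s : Fin k → ℕ) : Set EReal :=
  {x | ∃ j, 1 ≤ s j ∧ lastCrossing Lanes d s j ≤ ((rel Lanes j (s j - 1) + d : ℝ) : EReal) ∧
    x = lastCrossing Lanes d s j + plen Lanes j (s j - 1)}

variable (Lanes d) in
def HasOptimalSchedule (s : Fin k → ℕ) : Prop :=
  ∃ c, PartialValid Lanes s c ∧ DelayLE Lanes s c d ∧ td Lanes d s = completion Lanes s c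

theorem finite_dpCandidates (s : Fin k → ℕ) : (dpCandidates Lanes d s).Finite :=
  (Set.finite_range fun j => lastCrossing Lanes d s j + plen Lanes j (s j - 1)).subset <| by
    rintro _ ⟨j, -, -, rfl⟩
    exact ⟨j, rfl⟩

theorem sInf_dpCandidates_le_td (hL : ∀ j, LaneOK (Lanes j)) {s : Fin k → ℕ}
    (hs : ∀ j, s j ≤ (Lanes j).length) (hne : ∃ j, 0 < s j) :
    sInf (dpCandidates Lanes d s) ≤ td Lanes d s := by
  refine le_sInf ?_
  rintro _ ⟨c, hv, hd, rfl⟩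
  obtain ⟨J, hJ, hlast⟩ := exists_last_platoon hL hs hv hne
  have hJlt : s J - 1 < s J := by omega
  have hupdate : update s J (s J - 1) ≤ s := update_le_self_iff.2 (Nat.sub_le _ _)
  have hcross : lastCrossing Lanes d s J ≤ (c J (s J - 1) : EReal) :=
    max_le ((td_le_completion (hv.mono hupdate) (hd.mono hupdate)).trans
        (EReal.coe_le_coe_iff.2 (completion_update_le_of_last hL hs hv hJ hlast)))
      (EReal.coe_le_coe_iff.2 (hv.1 J _ hJlt))
  have hdelay : c J (s J - 1) ≤ rel Lanes J (s J - 1) + d := by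
    linarith [hd J _ hJlt]
  calc sInf (dpCandidates Lanes d s)
      ≤ lastCrossing Lanes d s J + plen Lanes J (s J - 1) :=
        sInf_le ⟨J, hJ, hcross.trans (EReal.coe_le_coe_iff.2 hdelay), rfl⟩
    _ ≤ ((c J (s J - 1) + plen Lanes J (s J - 1) : ℝ) : EReal) := by
        rw [EReal.coe_add]
        gcongr
    _ ≤ completion Lanes s c := EReal.coe_le_coe_iff.2 (le_completion s c hJlt)

theorem exists_schedule_of_mem_dpCandidates (hL : ∀ j, LaneOK (Lanes j)) {s : Fin k → ℕ}
    (hs : ∀ j, s j ≤ (Lanes j).length)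
    (hopt : ∀ s' < s, td Lanes d s' ≠ ⊤ → HasOptimalSchedule Lanes d s')
    {j : Fin k} (hj : 1 ≤ s j)
    (hcond : lastCrossing Lanes d s j ≤ ((rel Lanes j (s j - 1) + d : ℝ) : EReal)) :
    ∃ c, PartialValid Lanes s c ∧ DelayLE Lanes s c d ∧
      (completion Lanes s c : EReal) = lastCrossing Lanes d s j + plen Lanes j (s j - 1) := by
  have hne_top : td Lanes d (update s j (s j - 1)) ≠ ⊤ := fun h => by
    rw [lastCrossing, h, max_top_left, top_le_iff] at hcond
    exact EReal.coe_ne_top _ hcond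
  obtain ⟨c', hv, hd, htd⟩ := hopt _ (update_lt_self_iff.2 (by omega)) hne_top
  have hcross : lastCrossing Lanes d s j =
      (max (completion Lanes (update s j (s j - 1)) c') (rel Lanes j (s j - 1)) : ℝ) := by
    rw [lastCrossing, htd, EReal.coe_strictMono.monotone.map_max]
  rw [hcross, EReal.coe_le_coe_iff] at hcond
  obtain ⟨c, hv, hd, hc⟩ := exists_extend_schedule hj
    (plen_pos hL ((show s j - 1 < s j by omega).trans_le (hs j))).le hv hd
    (le_max_left _ _) (le_max_right _ _) hcond
  exact ⟨c, hv, hd, by rw [hc, hcross, EReal.coe_add]⟩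

theorem td_le_sInf_dpCandidates (hL : ∀ j, LaneOK (Lanes j)) {s : Fin k → ℕ}
    (hs : ∀ j, s j ≤ (Lanes j).length)
    (hopt : ∀ s' < s, td Lanes d s' ≠ ⊤ → HasOptimalSchedule Lanes d s') :
    td Lanes d s ≤ sInf (dpCandidates Lanes d s) := by
  refine le_sInf ?_
  rintro _ ⟨j, hj, hcond, rfl⟩
  obtain ⟨c, hv, hd, hc⟩ := exists_schedule_of_mem_dpCandidates hL hs hopt hj hcond
  exact hc ▸ td_le_completion hv hd

theorem hasOptimalSchedule_of_td_ne_top (hL : ∀ j, LaneOK (Lanes j)) {s : Fin k → ℕ}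
    (hs : ∀ j, s j ≤ (Lanes j).length) (htop : td Lanes d s ≠ ⊤) :
    HasOptimalSchedule Lanes d s := by
  induction s using WellFoundedLT.induction with
  | _ s ih =>
  by_cases hne : ∃ j, 0 < s j
  · have hopt : ∀ s' < s, td Lanes d s' ≠ ⊤ → HasOptimalSchedule Lanes d s' :=
      fun s' hlt => ih s' hlt fun j => (hlt.le j).trans (hs j)
    have heq := le_antisymm (td_le_sInf_dpCandidates hL hs hopt) (sInf_dpCandidates_le_td hL hs hne)
    rw [heq] at htop
    have hnonempty : (dpCandidates Lanes d s).Nonempty :=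
      Set.nonempty_iff_ne_empty.2 fun h => htop (h ▸ sInf_empty)
    obtain ⟨j, hj, hcond, hmin⟩ := hnonempty.csInf_mem (finite_dpCandidates s)
    obtain ⟨c, hv, hd, hc⟩ := exists_schedule_of_mem_dpCandidates hL hs hopt hj hcond
    exact ⟨c, hv, hd, by rw [heq, hmin, hc]⟩
  · obtain rfl : s = 0 := funext fun j => Nat.eq_zero_of_not_pos (not_exists.1 hne j)
    exact ⟨0, partialValid_zero 0, delayLE_zero 0, by rw [td_zero, completion_zero]⟩

end KWayMerge

/-- Dynamic programming recurrence for the `k`-way merge: for every nonempty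
state `s`, `td Lanes d s` is the minimum, over all lanes `j` with `s j ≥ 1` such
that `max (td Lanes d (s - eⱼ)) r ≤ r + d`, of `max (td Lanes d (s - eⱼ)) r + ℓ`,
where `s - eⱼ` decreases the `j`-th coordinate by one and `r`, `ℓ` are the
release time and length of the `s j`-th platoon (in release order) on lane `j`;
the minimum (infimum in `EReal`) over an empty set is `+∞`. -/
theorem stmt9 {k : ℕ} (Lanes : Fin k → List Platoon) (hL : ∀ j, LaneOK (Lanes j))
    (d : ℝ) (s : Fin k → ℕ) (hs : ∀ j, s j ≤ (Lanes j).length)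
    (hne : ∃ j, 0 < s j) :
    td Lanes d s =
      sInf {x : EReal | ∃ j : Fin k, 1 ≤ s j ∧
        max (td Lanes d (Function.update s j (s j - 1)))
            ((rel Lanes j (s j - 1) : ℝ) : EReal)
          ≤ ((rel Lanes j (s j - 1) + d : ℝ) : EReal) ∧
        x = max (td Lanes d (Function.update s j (s j - 1)))
              ((rel Lanes j (s j - 1) : ℝ) : EReal)
            + ((plen Lanes j (s j - 1) : ℝ) : EReal)} :=
  le_antisymm
    (td_le_sInf_dpCandidates hL hs fun _ hlt =>
      hasOptimalSchedule_of_td_ne_top hL fun j => (hlt.le j).trans (hs j))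
    (sInf_dpCandidates_le_td hL hs hne)
end
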